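/- Let x0 ∈ [0,1]^n and suppose that some coordinate x_{0i} satisfies 0 < x_{0i} < 1. Then there exists ε > 0 and a constant c < 1 such that Q_λ({x ∈ [0,1]^n : max_i |x_i − x_{0i}| ≤ ε}) ≤ c for all λ ∈ ℝ^n. In other words, in the one-feature-per-coordinate model it is not possible to come arbitrarily close to full knowledge acquisition about x0 unless all coordinates of x0 are 0 or 1. -/

import Mathlib

open MeasureTheory

/-- The exponentially tilted density on `[0,1]`: `g_λ(t) = λ e^{λt}/(e^λ − 1)` for `λ ≠ 0`
and `g_0(t) = 1`. -/
noncomputable def tiltDens (l t : ℝ) : ℝ :=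
  if l = 0 then 1 else l * Real.exp (l * t) / (Real.exp l - 1)

/-- The Gibbs posterior on the unit cube `[0,1]^n` with uniform prior and one coordinate
feature `f_i(x) = x_i` per coordinate: the product measure with density `∏ i g_{λ_i}(x_i)`. -/
noncomputable def cubeGibbs {n : ℕ} (lam : Fin n → ℝ) : Measure (Fin n → ℝ) :=
  (volume.restrict (Set.univ.pi fun _ : Fin n => Set.Icc (0 : ℝ) 1)).withDensity
    (fun x => ENNReal.ofReal (∏ i, tiltDens (lam i) (x i)))


open Set in
noncomputable def tiltTot (l t : ℝ) : ℝ :=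
  if l = 0 then t else Real.exp (l * t) / (Real.exp l - 1)

lemma tiltDens_nonneg (l t : ℝ) : 0 ≤ tiltDens l t := by
  unfold tiltDens
  split_ifs with h
  · norm_num
  · rcases lt_or_gt_of_ne h with hl | hl
    · apply div_nonneg_of_nonpos
        (mul_nonpos_of_nonpos_of_nonneg hl.le (Real.exp_nonneg _))
      have := Real.exp_lt_one_iff.2 hl
      linarith
    · apply div_nonneg
      · exact mul_nonneg hl.le (Real.exp_nonneg _)
      · simp [sub_nonneg, Real.one_le_exp_iff.2 hl.le]

lemma tiltDens_continuous (l : ℝ) : Continuous (tiltDens l) := by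
  unfold tiltDens
  split_ifs with h
  · exact continuous_const
  · exact ((continuous_const.mul (Real.continuous_exp.comp
      (continuous_const.mul continuous_id))).div_const _)

lemma tiltTot_hasDerivAt (l t : ℝ) : HasDerivAt (tiltTot l) (tiltDens l t) t := by
  unfold tiltTot tiltDens
  split_ifs with h
  · simpa using hasDerivAt_id' t
  · have h1 : HasDerivAt (fun u : ℝ => l * u) l t := by
      simpa using (hasDerivAt_id t).const_mul l
    have h2 : HasDerivAt (fun u : ℝ => Real.exp (l * u)) (Real.exp (l * t) * l) t :=
      (Real.hasDerivAt_exp (l * t)).comp t h1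
    have h3 := h2.div_const (Real.exp l - 1)
    rw [show l * Real.exp (l * t) / (Real.exp l - 1) = Real.exp (l * t) * l / (Real.exp l - 1) by ring]
    exact h3

lemma tilt_lintegral (l a b : ℝ) (hab : a ≤ b) :
    ∫⁻ u in Set.Icc a b, ENNReal.ofReal (tiltDens l u) =
      ENNReal.ofReal (tiltTot l b - tiltTot l a) := by
  have hcont := tiltDens_continuous l
  rw [← ofReal_integral_eq_lintegral_ofReal (hcont.integrableOn_Icc)
      (Filter.Eventually.of_forall fun x => tiltDens_nonneg l x)]
  congr 1
  rw [MeasureTheory.integral_Icc_eq_integral_Ioc, ← intervalIntegral.integral_of_le hab]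
  exact intervalIntegral.integral_eq_sub_of_hasDerivAt
    (fun t _ => tiltTot_hasDerivAt l t) (hcont.intervalIntegrable a b)

lemma tilt_total (l : ℝ) : tiltTot l 1 - tiltTot l 0 = 1 := by
  unfold tiltTot
  split_ifs with h
  · norm_num
  · have hne : Real.exp l - 1 ≠ 0 := sub_ne_zero.2 (fun hh => h ((Real.exp_eq_one_iff l).1 hh))
    rw [mul_one, mul_zero, Real.exp_zero, div_sub_div_same, div_self hne]

lemma tilt_key (l a b : ℝ) (h2ab : 0 ≤ 2*a - b) (hbb : b + (b - a) ≤ 1)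
    (hab : a ≤ b) (hlen : b - a ≤ 1/2) : tiltTot l b - tiltTot l a ≤ 1/2 := by
  have ha0 : 0 ≤ a := by linarith
  have hb1 : b ≤ 1 := by linarith
  unfold tiltTot
  split_ifs with h
  · linarith
  · rw [div_sub_div_same]
    rcases lt_or_gt_of_ne h with hl | hl
    · -- l < 0
      have hd : (0:ℝ) < 1 - Real.exp l := by
        have := Real.exp_lt_one_iff.2 hl; linarith
      have heq : (Real.exp (l*b) - Real.exp (l*a)) / (Real.exp l - 1)
          = (Real.exp (l*a) - Real.exp (l*b)) / (1 - Real.exp l) := by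
        rw [div_eq_div_iff (by linarith : Real.exp l - 1 ≠ 0) (by linarith : (1:ℝ) - Real.exp l ≠ 0)]; ring
      rw [heq, div_le_iff₀ hd]
      have h1 : Real.exp (l*b) ≤ Real.exp (l*a) :=
        Real.exp_le_exp.2 (by nlinarith)
      have h2 : (1:ℝ) ≤ Real.exp (l*(a-b)) := Real.one_le_exp_iff.2 (by nlinarith)
      have h3 : Real.exp (l*(2*a-b)) = Real.exp (l*(a-b)) * Real.exp (l*a) := by
        rw [← Real.exp_add]; ring_nf
      have h4 : Real.exp (l*a) = Real.exp (l*(a-b)) * Real.exp (l*b) := by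
        rw [← Real.exp_add]; ring_nf
      have h5 : Real.exp (l*(2*a-b)) ≤ 1 := Real.exp_le_one_iff.2 (by nlinarith)
      have h6 : Real.exp l ≤ Real.exp (l*b) := Real.exp_le_exp.2 (by nlinarith)
      have hprod : 0 ≤ (Real.exp (l*(a-b)) - 1) * (Real.exp (l*a) - Real.exp (l*b)) :=
        mul_nonneg (by linarith) (by linarith)
      nlinarith [hprod, h3, h4, h5, h6]
    · -- l > 0
      have hd : (0:ℝ) < Real.exp l - 1 := by
        have := Real.one_lt_exp_iff.2 hl; linarith
      rw [div_le_iff₀ hd]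
      have h1 : Real.exp (l*a) ≤ Real.exp (l*b) := Real.exp_le_exp.2 (by nlinarith)
      have h2 : (1:ℝ) ≤ Real.exp (l*(b-a)) := Real.one_le_exp_iff.2 (by nlinarith)
      have h3 : Real.exp (l*(2*b-a)) = Real.exp (l*(b-a)) * Real.exp (l*b) := by
        rw [← Real.exp_add]; ring_nf
      have h4 : Real.exp (l*b) = Real.exp (l*(b-a)) * Real.exp (l*a) := by
        rw [← Real.exp_add]; ring_nf
      have h5 : Real.exp (l*(2*b-a)) ≤ Real.exp l := Real.exp_le_exp.2 (by nlinarith)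
      have h6 : (1:ℝ) ≤ Real.exp (l*a) := Real.one_le_exp_iff.2 (by nlinarith)
      have hprod : 0 ≤ (Real.exp (l*(b-a)) - 1) * (Real.exp (l*b) - Real.exp (l*a)) :=
        mul_nonneg (by linarith) (by linarith)
      nlinarith [hprod, h3, h4, h5, h6]


lemma lmarginal_pi_prod {n : ℕ} (f : Fin n → ℝ → ENNReal) (hf : ∀ i, Measurable (f i))
    (s : Finset (Fin n)) (x : Fin n → ℝ) :
    (∫⋯∫⁻_s, (fun y => ∏ i, f i (y i)) ∂(fun _ => (volume : Measure ℝ))) x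
      = ∏ i, if i ∈ s then (∫⁻ t, f i t) else f i (x i) := by
  classical
  induction s using Finset.induction_on generalizing x with
  | empty => simp
  | insert i s hi ih =>
    have hmeas : Measurable fun y : Fin n → ℝ => ∏ j, f j (y j) :=
      Finset.measurable_prod _ fun j _ => (hf j).comp (measurable_pi_apply j)
    rw [MeasureTheory.lmarginal_insert _ hmeas hi]
    simp_rw [ih]
    have key : ∀ xi : ℝ, (∏ j, if j ∈ s then (∫⁻ t, f j t) else f j (Function.update x i xi j))
        = f i xi * ∏ j ∈ Finset.univ.erase i,
            (if j ∈ s then (∫⁻ t, f j t) else f j (x j)) := by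
      intro xi
      rw [← Finset.mul_prod_erase Finset.univ _ (Finset.mem_univ i)]
      congr 1
      · simp [hi, Function.update_self]
      · apply Finset.prod_congr rfl
        intro j hj
        rw [Function.update_of_ne (Finset.ne_of_mem_erase hj)]
    simp_rw [key]
    rw [lintegral_mul_const _ (hf i)]
    rw [← Finset.mul_prod_erase Finset.univ
        (fun j => if j ∈ insert i s then (∫⁻ t, f j t) else f j (x j)) (Finset.mem_univ i)]
    simp only [Finset.mem_insert_self, if_pos]
    congr 1
    apply Finset.prod_congr rfl
    intro j hj
    have : j ≠ i := Finset.ne_of_mem_erase hj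
    simp [Finset.mem_insert, this]

lemma lintegral_pi_prod {n : ℕ} (f : Fin n → ℝ → ENNReal) (hf : ∀ i, Measurable (f i)) :
    ∫⁻ x : Fin n → ℝ, ∏ i, f i (x i) = ∏ i, ∫⁻ t, f i t := by
  have := MeasureTheory.lintegral_eq_lmarginal_univ (μ := fun _ : Fin n => (volume : Measure ℝ))
      (f := fun y : Fin n → ℝ => ∏ i, f i (y i)) (fun _ => 0)
  rw [MeasureTheory.volume_pi] at *
  rw [this, lmarginal_pi_prod f hf]
  simp

/-- if some coordinate of `x0 ∈ [0,1]^n` satisfies `0 < x_{0i} < 1`, then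
there are `ε > 0` and `c < 1` such that `Q_λ({x : max_i |x_i − x_{0i}| ≤ ε}) ≤ c` for all
`λ`: full knowledge acquisition about `x0` cannot be approached in the
one-feature-per-coordinate model. -/
theorem cubeGibbs_no_full_knowledge_interior
    {n : ℕ} (x0 : Fin n → ℝ) (hx0 : ∀ i, x0 i ∈ Set.Icc (0 : ℝ) 1)
    (i0 : Fin n) (hi0 : 0 < x0 i0 ∧ x0 i0 < 1) :
    ∃ ε : ℝ, 0 < ε ∧ ∃ c : ENNReal, c < 1 ∧
      ∀ lam : Fin n → ℝ,
        cubeGibbs lam {x : Fin n → ℝ | ∀ i, |x i - x0 i| ≤ ε} ≤ c := by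
  classical
  obtain ⟨hpos, hlt⟩ := hi0
  set ε : ℝ := min (x0 i0 / 3) ((1 - x0 i0) / 3) with hε
  have hε1 : ε ≤ x0 i0 / 3 := min_le_left _ _
  have hε2 : ε ≤ (1 - x0 i0) / 3 := min_le_right _ _
  have hεpos : 0 < ε := lt_min (by linarith) (by linarith)
  refine ⟨ε, hεpos, ENNReal.ofReal (1/2), by
      rw [show (1:ENNReal) = ENNReal.ofReal 1 by simp]
      exact ENNReal.ofReal_lt_ofReal_iff_of_nonneg (by norm_num) |>.2 (by norm_num), ?_⟩
  intro lam
  -- the target set as a product of intervals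
  have hSeq : {x : Fin n → ℝ | ∀ i, |x i - x0 i| ≤ ε}
      = Set.univ.pi fun i => Set.Icc (x0 i - ε) (x0 i + ε) := by
    ext x
    simp only [Set.mem_setOf_eq, Set.mem_pi, Set.mem_univ, forall_true_left, Set.mem_Icc]
    constructor
    · intro h i
      have := abs_le.1 (h i); constructor <;> linarith [this.1, this.2]
    · intro h i
      rw [abs_le]; constructor <;> linarith [(h i).1, (h i).2]
  set s : Fin n → Set ℝ := fun i => Set.Icc (x0 i - ε) (x0 i + ε) ∩ Set.Icc 0 1 with hs
  have hsm : ∀ i, MeasurableSet (s i) := fun i => measurableSet_Icc.inter measurableSet_Icc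
  have hSmeas : MeasurableSet {x : Fin n → ℝ | ∀ i, |x i - x0 i| ≤ ε} := by
    rw [hSeq]; exact MeasurableSet.univ_pi fun i => measurableSet_Icc
  rw [cubeGibbs, withDensity_apply _ hSmeas, Measure.restrict_restrict hSmeas]
  have hinter : {x : Fin n → ℝ | ∀ i, |x i - x0 i| ≤ ε}
      ∩ (Set.univ.pi fun _ : Fin n => Set.Icc (0 : ℝ) 1) = Set.univ.pi s := by
    rw [hSeq, hs, Set.pi_inter_distrib]
  rw [hinter]
  -- rewrite as a full-space integral of a product of indicators
  set g : Fin n → ℝ → ENNReal :=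
    fun i t => (s i).indicator (fun u => ENNReal.ofReal (tiltDens (lam i) u)) t with hg
  have hgm : ∀ i, Measurable (g i) := fun i =>
    ((ENNReal.measurable_ofReal.comp (tiltDens_continuous (lam i)).measurable)).indicator (hsm i)
  have hpt : ∀ x : Fin n → ℝ,
      (Set.univ.pi s).indicator (fun x => ENNReal.ofReal (∏ i, tiltDens (lam i) (x i))) x
        = ∏ i, g i (x i) := by
    intro x
    by_cases hx : x ∈ Set.univ.pi s
    · rw [Set.indicator_of_mem hx,
        ENNReal.ofReal_prod_of_nonneg (fun i _ => tiltDens_nonneg _ _)]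
      apply Finset.prod_congr rfl
      intro i _
      rw [hg]; simp only []
      rw [Set.indicator_of_mem (hx i (Set.mem_univ i))]
    · rw [Set.indicator_of_notMem hx]
      obtain ⟨j, hj⟩ : ∃ j, x j ∉ s j := by
        by_contra hcon
        push_neg at hcon
        exact hx fun j _ => hcon j
      symm
      apply Finset.prod_eq_zero (Finset.mem_univ j)
      rw [hg]; simp only []
      rw [Set.indicator_of_notMem hj]
  rw [← lintegral_indicator (MeasurableSet.univ_pi hsm)]
  calc ∫⁻ x, (Set.univ.pi s).indicator
        (fun x => ENNReal.ofReal (∏ i, tiltDens (lam i) (x i))) x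
      = ∫⁻ x : Fin n → ℝ, ∏ i, g i (x i) := by
        apply lintegral_congr; exact hpt
    _ = ∏ i, ∫⁻ t, g i t := lintegral_pi_prod g hgm
    _ ≤ ENNReal.ofReal (1/2) := by
        have hle1 : ∀ i, (∫⁻ t, g i t) ≤ 1 := by
          intro i
          rw [hg]; simp only []
          rw [lintegral_indicator (hsm i)]
          calc ∫⁻ t in s i, ENNReal.ofReal (tiltDens (lam i) t)
              ≤ ∫⁻ t in Set.Icc (0:ℝ) 1, ENNReal.ofReal (tiltDens (lam i) t) :=
                lintegral_mono_set (Set.inter_subset_right)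
            _ = 1 := by
                rw [tilt_lintegral _ _ _ (by norm_num), tilt_total]; simp
        have hle2 : (∫⁻ t, g i0 t) ≤ ENNReal.ofReal (1/2) := by
          rw [hg]; simp only []
          rw [lintegral_indicator (hsm i0)]
          calc ∫⁻ t in s i0, ENNReal.ofReal (tiltDens (lam i0) t)
              ≤ ∫⁻ t in Set.Icc (x0 i0 - ε) (x0 i0 + ε),
                  ENNReal.ofReal (tiltDens (lam i0) t) :=
                lintegral_mono_set (Set.inter_subset_left)
            _ ≤ ENNReal.ofReal (1/2) := by
                rw [tilt_lintegral _ _ _ (by linarith)]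
                exact ENNReal.ofReal_le_ofReal
                  (tilt_key _ _ _ (by linarith) (by linarith) (by linarith) (by linarith))
        calc ∏ i, ∫⁻ t, g i t
            = (∫⁻ t, g i0 t) * ∏ i ∈ Finset.univ.erase i0, ∫⁻ t, g i t :=
              (Finset.mul_prod_erase Finset.univ _ (Finset.mem_univ i0)).symm
          _ ≤ ENNReal.ofReal (1/2) * 1 := by
              apply mul_le_mul' hle2
              exact Finset.prod_le_one (fun i _ => zero_le) (fun i _ => hle1 i)
          _ = ENNReal.ofReal (1/2) := mul_one _
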